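/- For all λμ-terms t, u and μ-variable α, the λ̄μμ̃-translation of the structural substitution (t[α := ⟨α⟩ · u])† reduces by zero or more linear λ̄μμ̃-reduction steps to t†[α := u† · α], and likewise for λμ-commands. -/

import Mathlib

set_option autoImplicit true

namespace CHSim

/-- Lift a de Bruijn renaming under a binder. -/
def upr (ξ : ℕ → ℕ) : ℕ → ℕ
  | 0 => 0
  | k+1 => ξ k + 1

/-! ## The λμ-calculus (de Bruijn representation).

λ-variables and μ-variables each have their own name space of de Bruijn
indices.  `abs t` is `λx.t` (binding λ-index 0) and `mabs c` is `μα.c`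
(binding μ-index 0); `cmd a t` is the command `[a]t`. -/

mutual
  inductive Tm : Type
    | var : ℕ → Tm
    | abs : Tm → Tm
    | app : Tm → Tm → Tm
    | mabs : Cm → Tm
  inductive Cm : Type
    | cmd : ℕ → Tm → Cm
end

/-- λμ-contexts `e ::= ⟨α⟩ | ⟨β⟩(t ·) | e · t`. -/
inductive Ct : Type
  | cvar : ℕ → Ct
  | push : ℕ → Tm → Ct
  | cons : Ct → Tm → Ct

/-- Filling a λμ-context with a term: `⟨α⟩⟨t⟩ = [α]t`,
`(⟨β⟩(u ·))⟨t⟩ = [β](u t)`, `(h · u)⟨t⟩ = h⟨t u⟩`. -/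
def fill : Ct → Tm → Cm
  | .cvar a, t => .cmd a t
  | .push b u, t => .cmd b (.app u t)
  | .cons h u, t => fill h (.app t u)

mutual
  /-- Renaming of λ-variables in λμ-terms. -/
  def renLT (ξ : ℕ → ℕ) : Tm → Tm
    | .var x => .var (ξ x)
    | .abs t => .abs (renLT (upr ξ) t)
    | .app t u => .app (renLT ξ t) (renLT ξ u)
    | .mabs c => .mabs (renLC ξ c)
  /-- Renaming of λ-variables in λμ-commands. -/
  def renLC (ξ : ℕ → ℕ) : Cm → Cm
    | .cmd a t => .cmd a (renLT ξ t)
end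

mutual
  /-- Renaming of μ-variables in λμ-terms. -/
  def renMT (ξ : ℕ → ℕ) : Tm → Tm
    | .var x => .var x
    | .abs t => .abs (renMT ξ t)
    | .app t u => .app (renMT ξ t) (renMT ξ u)
    | .mabs c => .mabs (renMC (upr ξ) c)
  /-- Renaming of μ-variables in λμ-commands. -/
  def renMC (ξ : ℕ → ℕ) : Cm → Cm
    | .cmd a t => .cmd (ξ a) (renMT ξ t)
end

/-- Renaming of λ-variables in λμ-contexts. -/
def renLE (ξ : ℕ → ℕ) : Ct → Ct
  | .cvar a => .cvar a
  | .push b t => .push b (renLT ξ t)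
  | .cons e t => .cons (renLE ξ e) (renLT ξ t)

/-- Renaming of μ-variables in λμ-contexts. -/
def renME (ξ : ℕ → ℕ) : Ct → Ct
  | .cvar a => .cvar (ξ a)
  | .push b t => .push (ξ b) (renMT ξ t)
  | .cons e t => .cons (renME ξ e) (renMT ξ t)

/-- Lifting a λ-substitution under a λ-binder. -/
def upsL (σ : ℕ → Tm) : ℕ → Tm
  | 0 => .var 0
  | k+1 => renLT Nat.succ (σ k)

mutual
  /-- (Capture-avoiding) substitution for λ-variables in λμ-terms. -/
  def lsubT (σ : ℕ → Tm) : Tm → Tm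
    | .var x => σ x
    | .abs t => .abs (lsubT (upsL σ) t)
    | .app t u => .app (lsubT σ t) (lsubT σ u)
    | .mabs c => .mabs (lsubC (fun k => renMT Nat.succ (σ k)) c)
  /-- Substitution for λ-variables in λμ-commands. -/
  def lsubC (σ : ℕ → Tm) : Cm → Cm
    | .cmd a t => .cmd a (lsubT σ t)
end

/-- Substitution for λ-variables in λμ-contexts. -/
def lsubE (σ : ℕ → Tm) : Ct → Ct
  | .cvar a => .cvar a
  | .push b t => .push b (lsubT σ t)
  | .cons e t => .cons (lsubE σ e) (lsubT σ t)

/-- The substitution replacing the λ-variable `x` by `u`. -/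
def sub1L (x : ℕ) (u : Tm) : ℕ → Tm := fun k => if k = x then u else .var k

/-- The β-substitution replacing the bound λ-variable 0 by `u`. -/
def sub0L (u : Tm) : ℕ → Tm
  | 0 => u
  | k+1 => .var k

/-- Lifting a structural (μ-)substitution under a μ-binder. -/
def upsM (σ : ℕ → Ct) : ℕ → Ct
  | 0 => .cvar 0
  | k+1 => renME Nat.succ (σ k)

mutual
  /-- Structural substitution of λμ-contexts for μ-variables in λμ-terms:
  every subcommand `[α]u` is replaced by `(σ α)⟨u[σ]⟩`. -/
  def msubT (σ : ℕ → Ct) : Tm → Tm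
    | .var x => .var x
    | .abs t => .abs (msubT (fun k => renLE Nat.succ (σ k)) t)
    | .app t u => .app (msubT σ t) (msubT σ u)
    | .mabs c => .mabs (msubC (upsM σ) c)
  /-- Structural substitution in λμ-commands. -/
  def msubC (σ : ℕ → Ct) : Cm → Cm
    | .cmd a t => fill (σ a) (msubT σ t)
end

/-- Structural substitution in λμ-contexts (the head variable of
`⟨β⟩(t ·)` is, by the freshness convention of the translations,
never the substituted variable, so it is left untouched). -/
def msubE (σ : ℕ → Ct) : Ct → Ct
  | .cvar a => σ a
  | .push b t => .push b (msubT σ t)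
  | .cons e t => .cons (msubE σ e) (msubT σ t)

/-- The structural substitution replacing the μ-variable `a` by the context `e`. -/
def sub1M (a : ℕ) (e : Ct) : ℕ → Ct := fun k => if k = a then e else .cvar k

/-- The structural substitution replacing the bound μ-variable 0 by the
context `e` (removing the binder). -/
def sub0M (e : Ct) : ℕ → Ct
  | 0 => e
  | k+1 => .cvar k

mutual
  /-- Number of free occurrences of the λ-variable `x` in a λμ-term. -/
  def cntLT (x : ℕ) : Tm → ℕ
    | .var y => if y = x then 1 else 0
    | .abs t => cntLT (x+1) t
    | .app t u => cntLT x t + cntLT x u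
    | .mabs c => cntLC x c
  /-- Number of free occurrences of the λ-variable `x` in a λμ-command. -/
  def cntLC (x : ℕ) : Cm → ℕ
    | .cmd _ t => cntLT x t
end

/-- λμ-values `v ::= x | λx.t`. -/
inductive IsVal : Tm → Prop
  | var (x : ℕ) : IsVal (.var x)
  | abs (t : Tm) : IsVal (.abs t)

/-! ### Reduction in λμ: congruence closure of root rules -/

mutual
  /-- Congruence (compatible) closure of root relations, term level. -/
  inductive KT (R1 : Tm → Tm → Prop) (R2 : Cm → Cm → Prop) : Tm → Tm → Prop
    | root {t t'} : R1 t t' → KT R1 R2 t t'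
    | absC {t t'} : KT R1 R2 t t' → KT R1 R2 (.abs t) (.abs t')
    | appL {t t'} (u) : KT R1 R2 t t' → KT R1 R2 (.app t u) (.app t' u)
    | appR (t) {u u'} : KT R1 R2 u u' → KT R1 R2 (.app t u) (.app t u')
    | mabsC {c c'} : KC R1 R2 c c' → KT R1 R2 (.mabs c) (.mabs c')
  /-- Congruence (compatible) closure of root relations, command level. -/
  inductive KC (R1 : Tm → Tm → Prop) (R2 : Cm → Cm → Prop) : Cm → Cm → Prop
    | root {c c'} : R2 c c' → KC R1 R2 c c'
    | cmdC (a) {t t'} : KT R1 R2 t t' → KC R1 R2 (.cmd a t) (.cmd a t')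
end

/-- Term-level root rules of the undirected λμ-calculus: β, μ, μ', θ. -/
inductive RootT : Tm → Tm → Prop
  | beta (u t : Tm) : RootT (.app (.abs u) t) (lsubT (sub0L t) u)
  | mu (c : Cm) (t : Tm) : RootT (.app (.mabs c) t)
      (.mabs (msubC (sub1M 0 (.cons (.cvar 0) (renMT Nat.succ t))) c))
  | mu' (t : Tm) (c : Cm) : RootT (.app t (.mabs c))
      (.mabs (msubC (sub1M 0 (.push 0 (renMT Nat.succ t))) c))
  | theta (t : Tm) : RootT (.mabs (.cmd 0 (renMT Nat.succ t))) t

/-- Command-level root rule of the λμ-calculus: ρ. -/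
inductive RootC : Cm → Cm → Prop
  | rho (b : ℕ) (c : Cm) : RootC (.cmd b (.mabs c)) (msubC (sub0M (.cvar b)) c)

/-- Term-level *linear* root rules of the λμ-calculus: θ, and β when the
argument is a variable or the bound variable occurs exactly once. -/
inductive RootTlin : Tm → Tm → Prop
  | beta (u t : Tm) : ((∃ y, t = Tm.var y) ∨ cntLT 0 u = 1) →
      RootTlin (.app (.abs u) t) (lsubT (sub0L t) u)
  | theta (t : Tm) : RootTlin (.mabs (.cmd 0 (renMT Nat.succ t))) t

/-- Term-level root rules of call-by-name λμ: β, μ, θ (no μ'). -/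
inductive RootTn : Tm → Tm → Prop
  | beta (u t : Tm) : RootTn (.app (.abs u) t) (lsubT (sub0L t) u)
  | mu (c : Cm) (t : Tm) : RootTn (.app (.mabs c) t)
      (.mabs (msubC (sub1M 0 (.cons (.cvar 0) (renMT Nat.succ t))) c))
  | theta (t : Tm) : RootTn (.mabs (.cmd 0 (renMT Nat.succ t))) t

/-- Term-level root rules of call-by-value λμ: βv, μv, μ', θ. -/
inductive RootTv : Tm → Tm → Prop
  | betav (u t : Tm) : IsVal t → RootTv (.app (.abs u) t) (lsubT (sub0L t) u)
  | muv (c : Cm) (t : Tm) : IsVal t → RootTv (.app (.mabs c) t)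
      (.mabs (msubC (sub1M 0 (.cons (.cvar 0) (renMT Nat.succ t))) c))
  | mu' (t : Tm) (c : Cm) : RootTv (.app t (.mabs c))
      (.mabs (msubC (sub1M 0 (.push 0 (renMT Nat.succ t))) c))
  | theta (t : Tm) : RootTv (.mabs (.cmd 0 (renMT Nat.succ t))) t

/-- Term-level *linear call-by-value* root rules of λμ. -/
inductive RootTvlin : Tm → Tm → Prop
  | betav (u t : Tm) : IsVal t → ((∃ y, t = Tm.var y) ∨ cntLT 0 u = 1) →
      RootTvlin (.app (.abs u) t) (lsubT (sub0L t) u)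
  | theta (t : Tm) : RootTvlin (.mabs (.cmd 0 (renMT Nat.succ t))) t

/-- One-step λμ-reduction (β, μ, μ', ρ, θ), terms. -/
abbrev StepT := KT RootT RootC
/-- One-step λμ-reduction (β, μ, μ', ρ, θ), commands. -/
abbrev StepC := KC RootT RootC
/-- One-step linear λμ-reduction, terms. -/
abbrev LStepT := KT RootTlin RootC
/-- One-step linear λμ-reduction, commands. -/
abbrev LStepC := KC RootTlin RootC
/-- One-step call-by-name λμ-reduction, terms. -/
abbrev StepNT := KT RootTn RootC
/-- One-step call-by-name λμ-reduction, commands. -/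
abbrev StepNC := KC RootTn RootC
/-- One-step call-by-value λμ-reduction, terms. -/
abbrev StepVT := KT RootTv RootC
/-- One-step call-by-value λμ-reduction, commands. -/
abbrev StepVC := KC RootTv RootC
/-- One-step linear call-by-value λμ-reduction, terms. -/
abbrev LStepVT := KT RootTvlin RootC
/-- One-step linear call-by-value λμ-reduction, commands. -/
abbrev LStepVC := KC RootTvlin RootC

/-- Reflexive-transitive closure. -/
abbrev Star {α : Type} (r : α → α → Prop) : α → α → Prop := Relation.ReflTransGen r

/-! ## The λ̄μμ̃-calculus (de Bruijn representation). -/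

mutual
  inductive BTm : Type
    | var : ℕ → BTm
    | abs : BTm → BTm
    | mabs : BCm → BTm
  inductive BCm : Type
    | cut : BTm → BCt → BCm
  inductive BCt : Type
    | cvar : ℕ → BCt
    | cons : BTm → BCt → BCt
    | tmu : BCm → BCt
end

mutual
  /-- Renaming of λ-variables in λ̄μμ̃-terms. -/
  def brenLT (ξ : ℕ → ℕ) : BTm → BTm
    | .var x => .var (ξ x)
    | .abs t => .abs (brenLT (upr ξ) t)
    | .mabs c => .mabs (brenLC ξ c)
  def brenLC (ξ : ℕ → ℕ) : BCm → BCm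
    | .cut t e => .cut (brenLT ξ t) (brenLE ξ e)
  def brenLE (ξ : ℕ → ℕ) : BCt → BCt
    | .cvar a => .cvar a
    | .cons t e => .cons (brenLT ξ t) (brenLE ξ e)
    | .tmu c => .tmu (brenLC (upr ξ) c)
end

mutual
  /-- Renaming of μ-variables in λ̄μμ̃-terms. -/
  def brenMT (ξ : ℕ → ℕ) : BTm → BTm
    | .var x => .var x
    | .abs t => .abs (brenMT ξ t)
    | .mabs c => .mabs (brenMC (upr ξ) c)
  def brenMC (ξ : ℕ → ℕ) : BCm → BCm
    | .cut t e => .cut (brenMT ξ t) (brenME ξ e)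
  def brenME (ξ : ℕ → ℕ) : BCt → BCt
    | .cvar a => .cvar (ξ a)
    | .cons t e => .cons (brenMT ξ t) (brenME ξ e)
    | .tmu c => .tmu (brenMC ξ c)
end

def bupsL (σ : ℕ → BTm) : ℕ → BTm
  | 0 => .var 0
  | k+1 => brenLT Nat.succ (σ k)

mutual
  /-- Substitution for λ-variables in λ̄μμ̃-terms. -/
  def blsubT (σ : ℕ → BTm) : BTm → BTm
    | .var x => σ x
    | .abs t => .abs (blsubT (bupsL σ) t)
    | .mabs c => .mabs (blsubC (fun k => brenMT Nat.succ (σ k)) c)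
  def blsubC (σ : ℕ → BTm) : BCm → BCm
    | .cut t e => .cut (blsubT σ t) (blsubE σ e)
  def blsubE (σ : ℕ → BTm) : BCt → BCt
    | .cvar a => .cvar a
    | .cons t e => .cons (blsubT σ t) (blsubE σ e)
    | .tmu c => .tmu (blsubC (bupsL σ) c)
end

def bsub1L (x : ℕ) (u : BTm) : ℕ → BTm := fun k => if k = x then u else .var k

def bsub0L (u : BTm) : ℕ → BTm
  | 0 => u
  | k+1 => .var k

def bupsM (σ : ℕ → BCt) : ℕ → BCt
  | 0 => .cvar 0
  | k+1 => brenME Nat.succ (σ k)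

mutual
  /-- Structural substitution of contexts for μ-variables in λ̄μμ̃-terms. -/
  def bmsubT (σ : ℕ → BCt) : BTm → BTm
    | .var x => .var x
    | .abs t => .abs (bmsubT (fun k => brenLE Nat.succ (σ k)) t)
    | .mabs c => .mabs (bmsubC (bupsM σ) c)
  def bmsubC (σ : ℕ → BCt) : BCm → BCm
    | .cut t e => .cut (bmsubT σ t) (bmsubE σ e)
  def bmsubE (σ : ℕ → BCt) : BCt → BCt
    | .cvar a => σ a
    | .cons t e => .cons (bmsubT σ t) (bmsubE σ e)
    | .tmu c => .tmu (bmsubC (fun k => brenLE Nat.succ (σ k)) c)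
end

def bsub1M (a : ℕ) (e : BCt) : ℕ → BCt := fun k => if k = a then e else .cvar k

def bsub0M (e : BCt) : ℕ → BCt
  | 0 => e
  | k+1 => .cvar k

mutual
  /-- Number of free occurrences of the λ-variable `x` in a λ̄μμ̃-term. -/
  def bcntLT (x : ℕ) : BTm → ℕ
    | .var y => if y = x then 1 else 0
    | .abs t => bcntLT (x+1) t
    | .mabs c => bcntLC x c
  def bcntLC (x : ℕ) : BCm → ℕ
    | .cut t e => bcntLT x t + bcntLE x e
  def bcntLE (x : ℕ) : BCt → ℕ
    | .cvar _ => 0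
    | .cons t e => bcntLT x t + bcntLE x e
    | .tmu c => bcntLC (x+1) c
end

mutual
  /-- Number of free occurrences of the μ-variable `a` in a λ̄μμ̃-term. -/
  def bcntMT (a : ℕ) : BTm → ℕ
    | .var _ => 0
    | .abs t => bcntMT a t
    | .mabs c => bcntMC (a+1) c
  def bcntMC (a : ℕ) : BCm → ℕ
    | .cut t e => bcntMT a t + bcntME a e
  def bcntME (a : ℕ) : BCt → ℕ
    | .cvar b => if b = a then 1 else 0
    | .cons t e => bcntMT a t + bcntME a e
    | .tmu c => bcntMC a c
end

/-- λ̄μμ̃-values `v ::= x | λx.t`. -/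
inductive BIsVal : BTm → Prop
  | var (x : ℕ) : BIsVal (.var x)
  | abs (t : BTm) : BIsVal (.abs t)

/-- Stacks (the contexts of λ̄μμ̃_T): `s ::= α | t · s`. -/
inductive IsStk : BCt → Prop
  | cvar (a : ℕ) : IsStk (.cvar a)
  | cons (t : BTm) {s : BCt} : IsStk s → IsStk (.cons t s)

/-! ### Reduction in λ̄μμ̃: congruence closure of root rules -/

mutual
  inductive JT (R1 : BTm → BTm → Prop) (R2 : BCm → BCm → Prop) : BTm → BTm → Prop
    | root {t t'} : R1 t t' → JT R1 R2 t t'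
    | absC {t t'} : JT R1 R2 t t' → JT R1 R2 (.abs t) (.abs t')
    | mabsC {c c'} : JC R1 R2 c c' → JT R1 R2 (.mabs c) (.mabs c')
  inductive JC (R1 : BTm → BTm → Prop) (R2 : BCm → BCm → Prop) : BCm → BCm → Prop
    | root {c c'} : R2 c c' → JC R1 R2 c c'
    | cutL {t t'} (e) : JT R1 R2 t t' → JC R1 R2 (.cut t e) (.cut t' e)
    | cutR (t) {e e'} : JE R1 R2 e e' → JC R1 R2 (.cut t e) (.cut t e')
  inductive JE (R1 : BTm → BTm → Prop) (R2 : BCm → BCm → Prop) : BCt → BCt → Prop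
    | consL {t t'} (e) : JT R1 R2 t t' → JE R1 R2 (.cons t e) (.cons t' e)
    | consR (t) {e e'} : JE R1 R2 e e' → JE R1 R2 (.cons t e) (.cons t e')
    | tmuC {c c'} : JC R1 R2 c c' → JE R1 R2 (.tmu c) (.tmu c')
end

/-- The term-level root rule of λ̄μμ̃: θ (shared by all evaluation disciplines). -/
inductive BRootT : BTm → BTm → Prop
  | theta (t : BTm) : BRootT (.mabs (.cut (brenMT Nat.succ t) (.cvar 0))) t

/-- Command-level root rules of the undirected λ̄μμ̃-calculus: β, μ, μ̃. -/
inductive BRootC : BCm → BCm → Prop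
  | beta (u t : BTm) (e : BCt) :
      BRootC (.cut (.abs u) (.cons t e)) (.cut t (.tmu (.cut u (brenLE Nat.succ e))))
  | mu (c : BCm) (e : BCt) : BRootC (.cut (.mabs c) e) (bmsubC (bsub0M e) c)
  | mutilde (t : BTm) (c : BCm) : BRootC (.cut t (.tmu c)) (blsubC (bsub0L t) c)

/-- Command-level *linear* root rules of λ̄μμ̃: β always; μ (resp. μ̃) when the
substituted context (resp. term) is a variable or the bound variable occurs
exactly once in the command. -/
inductive BRootClin : BCm → BCm → Prop
  | beta (u t : BTm) (e : BCt) :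
      BRootClin (.cut (.abs u) (.cons t e)) (.cut t (.tmu (.cut u (brenLE Nat.succ e))))
  | mu (c : BCm) (e : BCt) : ((∃ a, e = BCt.cvar a) ∨ bcntMC 0 c = 1) →
      BRootClin (.cut (.mabs c) e) (bmsubC (bsub0M e) c)
  | mutilde (t : BTm) (c : BCm) : ((∃ x, t = BTm.var x) ∨ bcntLC 0 c = 1) →
      BRootClin (.cut t (.tmu c)) (blsubC (bsub0L t) c)

/-- Command-level root rules of call-by-name λ̄μμ̃ (λ̄μμ̃_T): β, μₙ (stacks), μ̃. -/
inductive BRootCn : BCm → BCm → Prop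
  | beta (u t : BTm) (e : BCt) :
      BRootCn (.cut (.abs u) (.cons t e)) (.cut t (.tmu (.cut u (brenLE Nat.succ e))))
  | mun (c : BCm) (s : BCt) : IsStk s → BRootCn (.cut (.mabs c) s) (bmsubC (bsub0M s) c)
  | mutilde (t : BTm) (c : BCm) : BRootCn (.cut t (.tmu c)) (blsubC (bsub0L t) c)

/-- Command-level *linear call-by-name* root rules of λ̄μμ̃. -/
inductive BRootCnlin : BCm → BCm → Prop
  | beta (u t : BTm) (e : BCt) :
      BRootCnlin (.cut (.abs u) (.cons t e)) (.cut t (.tmu (.cut u (brenLE Nat.succ e))))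
  | mun (c : BCm) (s : BCt) : IsStk s → ((∃ a, s = BCt.cvar a) ∨ bcntMC 0 c = 1) →
      BRootCnlin (.cut (.mabs c) s) (bmsubC (bsub0M s) c)
  | mutilde (t : BTm) (c : BCm) : ((∃ x, t = BTm.var x) ∨ bcntLC 0 c = 1) →
      BRootCnlin (.cut t (.tmu c)) (blsubC (bsub0L t) c)

/-- Command-level root rules of call-by-value λ̄μμ̃ (λ̄μμ̃_Q): β, μ, μ̃ᵥ (values). -/
inductive BRootCv : BCm → BCm → Prop
  | beta (u t : BTm) (e : BCt) :
      BRootCv (.cut (.abs u) (.cons t e)) (.cut t (.tmu (.cut u (brenLE Nat.succ e))))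
  | mu (c : BCm) (e : BCt) : BRootCv (.cut (.mabs c) e) (bmsubC (bsub0M e) c)
  | mutildev (v : BTm) (c : BCm) : BIsVal v →
      BRootCv (.cut v (.tmu c)) (blsubC (bsub0L v) c)

/-- Command-level *linear call-by-value* root rules of λ̄μμ̃. -/
inductive BRootCvlin : BCm → BCm → Prop
  | beta (u t : BTm) (e : BCt) :
      BRootCvlin (.cut (.abs u) (.cons t e)) (.cut t (.tmu (.cut u (brenLE Nat.succ e))))
  | mu (c : BCm) (e : BCt) : ((∃ a, e = BCt.cvar a) ∨ bcntMC 0 c = 1) →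
      BRootCvlin (.cut (.mabs c) e) (bmsubC (bsub0M e) c)
  | mutildev (v : BTm) (c : BCm) : BIsVal v → ((∃ x, v = BTm.var x) ∨ bcntLC 0 c = 1) →
      BRootCvlin (.cut v (.tmu c)) (blsubC (bsub0L v) c)

/-- Command-level root rules with β' instead of β: β', μ, μ̃. -/
inductive BRootCp : BCm → BCm → Prop
  | beta' (u t : BTm) (e : BCt) :
      BRootCp (.cut (.abs u) (.cons t e)) (.cut (blsubT (bsub0L t) u) e)
  | mu (c : BCm) (e : BCt) : BRootCp (.cut (.mabs c) e) (bmsubC (bsub0M e) c)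
  | mutilde (t : BTm) (c : BCm) : BRootCp (.cut t (.tmu c)) (blsubC (bsub0L t) c)

/-- Command-level call-by-name root rules with β': β', μₙ, μ̃. -/
inductive BRootCnp : BCm → BCm → Prop
  | beta' (u t : BTm) (e : BCt) :
      BRootCnp (.cut (.abs u) (.cons t e)) (.cut (blsubT (bsub0L t) u) e)
  | mun (c : BCm) (s : BCt) : IsStk s → BRootCnp (.cut (.mabs c) s) (bmsubC (bsub0M s) c)
  | mutilde (t : BTm) (c : BCm) : BRootCnp (.cut t (.tmu c)) (blsubC (bsub0L t) c)

/-- Command-level call-by-value root rules with β': β' (values), μ, μ̃ᵥ. -/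
inductive BRootCvp : BCm → BCm → Prop
  | beta' (u v : BTm) (e : BCt) : BIsVal v →
      BRootCvp (.cut (.abs u) (.cons v e)) (.cut (blsubT (bsub0L v) u) e)
  | mu (c : BCm) (e : BCt) : BRootCvp (.cut (.mabs c) e) (bmsubC (bsub0M e) c)
  | mutildev (v : BTm) (c : BCm) : BIsVal v →
      BRootCvp (.cut v (.tmu c)) (blsubC (bsub0L v) c)

/-- One-step λ̄μμ̃-reduction (β, μ, μ̃, θ), terms. -/
abbrev BStepT := JT BRootT BRootC
abbrev BStepC := JC BRootT BRootC
abbrev BStepE := JE BRootT BRootC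
/-- One-step linear λ̄μμ̃-reduction. -/
abbrev LBStepT := JT BRootT BRootClin
abbrev LBStepC := JC BRootT BRootClin
abbrev LBStepE := JE BRootT BRootClin
/-- One-step call-by-name λ̄μμ̃-reduction. -/
abbrev BStepNT := JT BRootT BRootCn
abbrev BStepNC := JC BRootT BRootCn
abbrev BStepNE := JE BRootT BRootCn
/-- One-step linear call-by-name λ̄μμ̃-reduction. -/
abbrev LBStepNT := JT BRootT BRootCnlin
abbrev LBStepNC := JC BRootT BRootCnlin
/-- One-step call-by-value λ̄μμ̃-reduction. -/
abbrev BStepVT := JT BRootT BRootCv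
abbrev BStepVC := JC BRootT BRootCv
/-- One-step linear call-by-value λ̄μμ̃-reduction. -/
abbrev LBStepVT := JT BRootT BRootCvlin
abbrev LBStepVC := JC BRootT BRootCvlin
/-- One-step λ̄μμ̃-reduction with β' (β', μ, μ̃, θ). -/
abbrev BStepPT := JT BRootT BRootCp
abbrev BStepPC := JC BRootT BRootCp
/-- One-step call-by-name λ̄μμ̃-reduction with β'. -/
abbrev BStepNPT := JT BRootT BRootCnp
abbrev BStepNPC := JC BRootT BRootCnp
/-- One-step call-by-value λ̄μμ̃-reduction with β'. -/
abbrev BStepVPT := JT BRootT BRootCvp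
abbrev BStepVPC := JC BRootT BRootCvp

/-! ## The translation `(·)†` from λμ to λ̄μμ̃ -/

mutual
  /-- `x† = x`, `(λx.u)† = λx.u†`, `(u v)† = μβ.⟨v† | μ̃y.⟨u† | y·β⟩⟩`
  (`y`, `β` fresh, realized by de Bruijn lifting), `(μα.c)† = μα.c†`. -/
  def dagT : Tm → BTm
    | .var x => .var x
    | .abs t => .abs (dagT t)
    | .app u v => .mabs (.cut (brenMT Nat.succ (dagT v))
        (.tmu (.cut (brenLT Nat.succ (brenMT Nat.succ (dagT u)))
          (.cons (.var 0) (.cvar 0)))))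
    | .mabs c => .mabs (dagC c)
  /-- `([α]t)† = ⟨t† | α⟩`. -/
  def dagC : Cm → BCm
    | .cmd a t => .cut (dagT t) (.cvar a)
end

/-- `⟨α⟩† = α`, `(⟨β⟩(t ·))† = μ̃y.⟨t† | y·β⟩`, `(h · t)† = t† · h†`. -/
def dagE : Ct → BCt
  | .cvar a => .cvar a
  | .push b t => .tmu (.cut (brenLT Nat.succ (dagT t)) (.cons (.var 0) (.cvar b)))
  | .cons e t => .cons (dagT t) (dagE e)

/-! ## The translation `(·)∘` from λ̄μμ̃ to λμ -/

mutual
  /-- `x∘ = x`, `(λx.u)∘ = λx.u∘`, `(μα.c)∘ = μα.c∘`. -/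
  def circT : BTm → Tm
    | .var x => .var x
    | .abs t => .abs (circT t)
    | .mabs c => .mabs (circC c)
  /-- `⟨t | e⟩∘ = e∘⟨t∘⟩`. -/
  def circC : BCm → Cm
    | .cut t e => fill (circE e) (circT t)
  /-- `α∘ = ⟨α⟩`, `(t · h)∘ = h∘ · t∘`,
  `(μ̃x.c)∘ = ⟨β⟩((λx.μδ.c∘) ·)` with `δ ∉ c` (realized by lifting). -/
  def circE : BCt → Ct
    | .cvar a => .cvar a
    | .cons t e => .cons (circE e) (circT t)
    | .tmu c => .push 0 (.abs (.mabs (renMC Nat.succ (circC c))))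
end

/-!
The only case of the induction that is not a congruence is a command `[α]w`, which the
substitution turns into `[α](w' u)` with `w' = w[α := ⟨α⟩ · u]`. Its translation
`⟨μβ.⟨u† | μ̃y.⟨w'† | y · β⟩⟩ | α⟩` reduces by a μ-step (the context `α` is a variable) and a
μ̃-step (`y` occurs once) to `⟨w'† | u† · α⟩`, and by induction to `⟨w†[α := u† · α] | u† · α⟩`.
The congruence cases pass under binders, so they need that renamings commute with the
translation and with both substitutions, and that they preserve linear steps.
-/

theorem upr_comp_succ (ξ : ℕ → ℕ) : upr ξ ∘ Nat.succ = Nat.succ ∘ ξ := rfl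

theorem upr_comp_upr (ξ ζ : ℕ → ℕ) : upr ξ ∘ upr ζ = upr (ξ ∘ ζ) := by
  funext k; cases k <;> rfl

theorem upr_eq_zero_iff (ξ : ℕ → ℕ) (y : ℕ) : upr ξ y = 0 ↔ y = 0 := by
  cases y <;> simp [upr]

theorem upr_eq_succ_iff {ξ : ℕ → ℕ} {x x' : ℕ} (h : ∀ y, ξ y = x ↔ y = x') (y : ℕ) :
    upr ξ y = x + 1 ↔ y = x' + 1 := by
  cases y with
  | zero => simp [upr]
  | succ y => have := h y; simp only [upr]; omega

theorem upr_ne_succ {ξ : ℕ → ℕ} {x : ℕ} (h : ∀ y, ξ y ≠ x) (y : ℕ) : upr ξ y ≠ x + 1 := by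
  cases y with
  | zero => simp [upr]
  | succ y => have := h y; simp only [upr]; omega

section Renaming

mutual
theorem brenLT_brenLT (ξ ζ : ℕ → ℕ) : ∀ t : BTm, brenLT ξ (brenLT ζ t) = brenLT (ξ ∘ ζ) t
  | .var _ => rfl
  | .abs t => by simp only [brenLT]; rw [brenLT_brenLT, upr_comp_upr]
  | .mabs c => by simp only [brenLT]; rw [brenLC_brenLC]
theorem brenLC_brenLC (ξ ζ : ℕ → ℕ) : ∀ c : BCm, brenLC ξ (brenLC ζ c) = brenLC (ξ ∘ ζ) c
  | .cut t e => by simp only [brenLC]; rw [brenLT_brenLT, brenLE_brenLE]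
theorem brenLE_brenLE (ξ ζ : ℕ → ℕ) : ∀ e : BCt, brenLE ξ (brenLE ζ e) = brenLE (ξ ∘ ζ) e
  | .cvar _ => rfl
  | .cons t e => by simp only [brenLE]; rw [brenLT_brenLT, brenLE_brenLE]
  | .tmu c => by simp only [brenLE]; rw [brenLC_brenLC, upr_comp_upr]
end

mutual
theorem brenMT_brenMT (ξ ζ : ℕ → ℕ) : ∀ t : BTm, brenMT ξ (brenMT ζ t) = brenMT (ξ ∘ ζ) t
  | .var _ => rfl
  | .abs t => by simp only [brenMT]; rw [brenMT_brenMT]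
  | .mabs c => by simp only [brenMT]; rw [brenMC_brenMC, upr_comp_upr]
theorem brenMC_brenMC (ξ ζ : ℕ → ℕ) : ∀ c : BCm, brenMC ξ (brenMC ζ c) = brenMC (ξ ∘ ζ) c
  | .cut t e => by simp only [brenMC]; rw [brenMT_brenMT, brenME_brenME]
theorem brenME_brenME (ξ ζ : ℕ → ℕ) : ∀ e : BCt, brenME ξ (brenME ζ e) = brenME (ξ ∘ ζ) e
  | .cvar _ => rfl
  | .cons t e => by simp only [brenME]; rw [brenMT_brenMT, brenME_brenME]
  | .tmu c => by simp only [brenME]; rw [brenMC_brenMC]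
end

mutual
theorem brenLT_brenMT (ξ ζ : ℕ → ℕ) : ∀ t : BTm, brenLT ξ (brenMT ζ t) = brenMT ζ (brenLT ξ t)
  | .var _ => rfl
  | .abs t => by simp only [brenLT, brenMT]; rw [brenLT_brenMT]
  | .mabs c => by simp only [brenLT, brenMT]; rw [brenLC_brenMC]
theorem brenLC_brenMC (ξ ζ : ℕ → ℕ) : ∀ c : BCm, brenLC ξ (brenMC ζ c) = brenMC ζ (brenLC ξ c)
  | .cut t e => by simp only [brenLC, brenMC]; rw [brenLT_brenMT, brenLE_brenME]
theorem brenLE_brenME (ξ ζ : ℕ → ℕ) : ∀ e : BCt, brenLE ξ (brenME ζ e) = brenME ζ (brenLE ξ e)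
  | .cvar _ => rfl
  | .cons t e => by simp only [brenLE, brenME]; rw [brenLT_brenMT, brenLE_brenME]
  | .tmu c => by simp only [brenLE, brenME]; rw [brenLC_brenMC]
end

theorem brenLT_upr_brenLT_succ (ξ : ℕ → ℕ) (t : BTm) :
    brenLT (upr ξ) (brenLT Nat.succ t) = brenLT Nat.succ (brenLT ξ t) := by
  rw [brenLT_brenLT, brenLT_brenLT, upr_comp_succ]

theorem brenLE_upr_brenLE_succ (ξ : ℕ → ℕ) (e : BCt) :
    brenLE (upr ξ) (brenLE Nat.succ e) = brenLE Nat.succ (brenLE ξ e) := by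
  rw [brenLE_brenLE, brenLE_brenLE, upr_comp_succ]

theorem brenMT_upr_brenMT_succ (ξ : ℕ → ℕ) (t : BTm) :
    brenMT (upr ξ) (brenMT Nat.succ t) = brenMT Nat.succ (brenMT ξ t) := by
  rw [brenMT_brenMT, brenMT_brenMT, upr_comp_succ]

theorem brenME_upr_brenME_succ (ξ : ℕ → ℕ) (e : BCt) :
    brenME (upr ξ) (brenME Nat.succ e) = brenME Nat.succ (brenME ξ e) := by
  rw [brenME_brenME, brenME_brenME, upr_comp_succ]

end Renaming

section StructuralSubstitution

theorem bupsM_comp_upr (σ : ℕ → BCt) (ξ : ℕ → ℕ) : bupsM σ ∘ upr ξ = bupsM (σ ∘ ξ) := by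
  funext k; cases k <;> rfl

mutual
theorem bmsubT_brenMT (σ : ℕ → BCt) (ξ : ℕ → ℕ) :
    ∀ t : BTm, bmsubT σ (brenMT ξ t) = bmsubT (σ ∘ ξ) t
  | .var _ => rfl
  | .abs t => by simp only [brenMT, bmsubT]; exact congrArg BTm.abs (bmsubT_brenMT _ ξ t)
  | .mabs c => by simp only [brenMT, bmsubT]; rw [bmsubC_brenMC, bupsM_comp_upr]
theorem bmsubC_brenMC (σ : ℕ → BCt) (ξ : ℕ → ℕ) :
    ∀ c : BCm, bmsubC σ (brenMC ξ c) = bmsubC (σ ∘ ξ) c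
  | .cut t e => by simp only [brenMC, bmsubC]; rw [bmsubT_brenMT, bmsubE_brenME]
theorem bmsubE_brenME (σ : ℕ → BCt) (ξ : ℕ → ℕ) :
    ∀ e : BCt, bmsubE σ (brenME ξ e) = bmsubE (σ ∘ ξ) e
  | .cvar _ => rfl
  | .cons t e => by simp only [brenME, bmsubE]; rw [bmsubT_brenMT, bmsubE_brenME]
  | .tmu c => by simp only [brenME, bmsubE]; exact congrArg BCt.tmu (bmsubC_brenMC _ ξ c)
end

theorem bupsM_map_brenME (σ : ℕ → BCt) (ξ : ℕ → ℕ) :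
    bupsM (fun k => brenME ξ (σ k)) = fun k => brenME (upr ξ) (bupsM σ k) := by
  funext k
  cases k with
  | zero => rfl
  | succ k => simp only [bupsM]; rw [brenME_upr_brenME_succ]

mutual
theorem bmsubT_map_brenME (σ : ℕ → BCt) (ξ : ℕ → ℕ) :
    ∀ t : BTm, bmsubT (fun k => brenME ξ (σ k)) t = brenMT ξ (bmsubT σ t)
  | .var _ => rfl
  | .abs t => by simp only [bmsubT, brenMT, brenLE_brenME]; rw [bmsubT_map_brenME]
  | .mabs c => by simp only [bmsubT, brenMT]; rw [bupsM_map_brenME, bmsubC_map_brenME]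
theorem bmsubC_map_brenME (σ : ℕ → BCt) (ξ : ℕ → ℕ) :
    ∀ c : BCm, bmsubC (fun k => brenME ξ (σ k)) c = brenMC ξ (bmsubC σ c)
  | .cut t e => by simp only [bmsubC, brenMC]; rw [bmsubT_map_brenME, bmsubE_map_brenME]
theorem bmsubE_map_brenME (σ : ℕ → BCt) (ξ : ℕ → ℕ) :
    ∀ e : BCt, bmsubE (fun k => brenME ξ (σ k)) e = brenME ξ (bmsubE σ e)
  | .cvar _ => rfl
  | .cons t e => by simp only [bmsubE, brenME]; rw [bmsubT_map_brenME, bmsubE_map_brenME]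
  | .tmu c => by simp only [bmsubE, brenME, brenLE_brenME]; rw [bmsubC_map_brenME]
end

theorem bupsM_map_brenLE (σ : ℕ → BCt) (ξ : ℕ → ℕ) :
    bupsM (fun k => brenLE ξ (σ k)) = fun k => brenLE ξ (bupsM σ k) := by
  funext k
  cases k with
  | zero => rfl
  | succ k => simp only [bupsM]; rw [brenLE_brenME]

mutual
theorem bmsubT_brenLT (σ : ℕ → BCt) (ξ : ℕ → ℕ) :
    ∀ t : BTm, bmsubT (fun k => brenLE ξ (σ k)) (brenLT ξ t) = brenLT ξ (bmsubT σ t)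
  | .var _ => rfl
  | .abs t => by simp only [bmsubT, brenLT, ← brenLE_upr_brenLE_succ]; rw [bmsubT_brenLT]
  | .mabs c => by simp only [bmsubT, brenLT]; rw [bupsM_map_brenLE, bmsubC_brenLC]
theorem bmsubC_brenLC (σ : ℕ → BCt) (ξ : ℕ → ℕ) :
    ∀ c : BCm, bmsubC (fun k => brenLE ξ (σ k)) (brenLC ξ c) = brenLC ξ (bmsubC σ c)
  | .cut t e => by simp only [bmsubC, brenLC]; rw [bmsubT_brenLT, bmsubE_brenLE]
theorem bmsubE_brenLE (σ : ℕ → BCt) (ξ : ℕ → ℕ) :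
    ∀ e : BCt, bmsubE (fun k => brenLE ξ (σ k)) (brenLE ξ e) = brenLE ξ (bmsubE σ e)
  | .cvar _ => rfl
  | .cons t e => by simp only [bmsubE, brenLE]; rw [bmsubT_brenLT, bmsubE_brenLE]
  | .tmu c => by simp only [bmsubE, brenLE, ← brenLE_upr_brenLE_succ]; rw [bmsubC_brenLC]
end

theorem bupsM_cvar : bupsM BCt.cvar = BCt.cvar := by
  funext k; cases k <;> rfl

mutual
theorem bmsubT_cvar : ∀ t : BTm, bmsubT BCt.cvar t = t
  | .var _ => rfl
  | .abs t => by simp only [bmsubT]; exact congrArg BTm.abs (bmsubT_cvar t)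
  | .mabs c => by simp only [bmsubT]; rw [bupsM_cvar, bmsubC_cvar]
theorem bmsubC_cvar : ∀ c : BCm, bmsubC BCt.cvar c = c
  | .cut t e => by simp only [bmsubC]; rw [bmsubT_cvar, bmsubE_cvar]
theorem bmsubE_cvar : ∀ e : BCt, bmsubE BCt.cvar e = e
  | .cvar _ => rfl
  | .cons t e => by simp only [bmsubE]; rw [bmsubT_cvar, bmsubE_cvar]
  | .tmu c => by simp only [bmsubE]; exact congrArg BCt.tmu (bmsubC_cvar c)
end

theorem bmsubT_bupsM_brenMT_succ (σ : ℕ → BCt) (t : BTm) :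
    bmsubT (bupsM σ) (brenMT Nat.succ t) = brenMT Nat.succ (bmsubT σ t) := by
  rw [bmsubT_brenMT, ← bmsubT_map_brenME]; rfl

theorem bmsubT_bsub0M_brenMT_succ (e : BCt) (t : BTm) :
    bmsubT (bsub0M e) (brenMT Nat.succ t) = t := by
  rw [bmsubT_brenMT]; exact bmsubT_cvar t

end StructuralSubstitution

section LambdaSubstitution

theorem bupsL_comp_upr (σ : ℕ → BTm) (ξ : ℕ → ℕ) : bupsL σ ∘ upr ξ = bupsL (σ ∘ ξ) := by
  funext k; cases k <;> rfl

mutual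
theorem blsubT_brenLT (σ : ℕ → BTm) (ξ : ℕ → ℕ) :
    ∀ t : BTm, blsubT σ (brenLT ξ t) = blsubT (σ ∘ ξ) t
  | .var _ => rfl
  | .abs t => by simp only [brenLT, blsubT]; rw [blsubT_brenLT, bupsL_comp_upr]
  | .mabs c => by simp only [brenLT, blsubT]; exact congrArg BTm.mabs (blsubC_brenLC _ ξ c)
theorem blsubC_brenLC (σ : ℕ → BTm) (ξ : ℕ → ℕ) :
    ∀ c : BCm, blsubC σ (brenLC ξ c) = blsubC (σ ∘ ξ) c
  | .cut t e => by simp only [brenLC, blsubC]; rw [blsubT_brenLT, blsubE_brenLE]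
theorem blsubE_brenLE (σ : ℕ → BTm) (ξ : ℕ → ℕ) :
    ∀ e : BCt, blsubE σ (brenLE ξ e) = blsubE (σ ∘ ξ) e
  | .cvar _ => rfl
  | .cons t e => by simp only [brenLE, blsubE]; rw [blsubT_brenLT, blsubE_brenLE]
  | .tmu c => by simp only [brenLE, blsubE]; rw [blsubC_brenLC, bupsL_comp_upr]
end

theorem bupsL_map_brenLT (σ : ℕ → BTm) (ξ : ℕ → ℕ) :
    bupsL (fun k => brenLT ξ (σ k)) = fun k => brenLT (upr ξ) (bupsL σ k) := by
  funext k
  cases k with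
  | zero => rfl
  | succ k => simp only [bupsL]; rw [brenLT_upr_brenLT_succ]

mutual
theorem blsubT_map_brenLT (σ : ℕ → BTm) (ξ : ℕ → ℕ) :
    ∀ t : BTm, blsubT (fun k => brenLT ξ (σ k)) t = brenLT ξ (blsubT σ t)
  | .var _ => rfl
  | .abs t => by simp only [blsubT, brenLT]; rw [bupsL_map_brenLT, blsubT_map_brenLT]
  | .mabs c => by simp only [blsubT, brenLT, ← brenLT_brenMT]; rw [blsubC_map_brenLT]
theorem blsubC_map_brenLT (σ : ℕ → BTm) (ξ : ℕ → ℕ) :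
    ∀ c : BCm, blsubC (fun k => brenLT ξ (σ k)) c = brenLC ξ (blsubC σ c)
  | .cut t e => by simp only [blsubC, brenLC]; rw [blsubT_map_brenLT, blsubE_map_brenLT]
theorem blsubE_map_brenLT (σ : ℕ → BTm) (ξ : ℕ → ℕ) :
    ∀ e : BCt, blsubE (fun k => brenLT ξ (σ k)) e = brenLE ξ (blsubE σ e)
  | .cvar _ => rfl
  | .cons t e => by simp only [blsubE, brenLE]; rw [blsubT_map_brenLT, blsubE_map_brenLT]
  | .tmu c => by simp only [blsubE, brenLE]; rw [bupsL_map_brenLT, blsubC_map_brenLT]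
end

theorem bupsL_map_brenMT (σ : ℕ → BTm) (ξ : ℕ → ℕ) :
    bupsL (fun k => brenMT ξ (σ k)) = fun k => brenMT ξ (bupsL σ k) := by
  funext k
  cases k with
  | zero => rfl
  | succ k => simp only [bupsL]; rw [brenLT_brenMT]

mutual
theorem blsubT_brenMT (σ : ℕ → BTm) (ξ : ℕ → ℕ) :
    ∀ t : BTm, blsubT (fun k => brenMT ξ (σ k)) (brenMT ξ t) = brenMT ξ (blsubT σ t)
  | .var _ => rfl
  | .abs t => by simp only [blsubT, brenMT]; rw [bupsL_map_brenMT, blsubT_brenMT]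
  | .mabs c => by simp only [blsubT, brenMT, ← brenMT_upr_brenMT_succ]; rw [blsubC_brenMC]
theorem blsubC_brenMC (σ : ℕ → BTm) (ξ : ℕ → ℕ) :
    ∀ c : BCm, blsubC (fun k => brenMT ξ (σ k)) (brenMC ξ c) = brenMC ξ (blsubC σ c)
  | .cut t e => by simp only [blsubC, brenMC]; rw [blsubT_brenMT, blsubE_brenME]
theorem blsubE_brenME (σ : ℕ → BTm) (ξ : ℕ → ℕ) :
    ∀ e : BCt, blsubE (fun k => brenMT ξ (σ k)) (brenME ξ e) = brenME ξ (blsubE σ e)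
  | .cvar _ => rfl
  | .cons t e => by simp only [blsubE, brenME]; rw [blsubT_brenMT, blsubE_brenME]
  | .tmu c => by simp only [blsubE, brenME]; rw [bupsL_map_brenMT, blsubC_brenMC]
end

theorem bupsL_var : bupsL BTm.var = BTm.var := by
  funext k; cases k <;> rfl

mutual
theorem blsubT_var : ∀ t : BTm, blsubT BTm.var t = t
  | .var _ => rfl
  | .abs t => by simp only [blsubT]; rw [bupsL_var, blsubT_var]
  | .mabs c => by simp only [blsubT]; exact congrArg BTm.mabs (blsubC_var c)
theorem blsubC_var : ∀ c : BCm, blsubC BTm.var c = c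
  | .cut t e => by simp only [blsubC]; rw [blsubT_var, blsubE_var]
theorem blsubE_var : ∀ e : BCt, blsubE BTm.var e = e
  | .cvar _ => rfl
  | .cons t e => by simp only [blsubE]; rw [blsubT_var, blsubE_var]
  | .tmu c => by simp only [blsubE]; rw [bupsL_var, blsubC_var]
end

theorem blsubT_bsub0L_brenLT_succ (v t : BTm) : blsubT (bsub0L v) (brenLT Nat.succ t) = t := by
  rw [blsubT_brenLT]; exact blsubT_var t

end LambdaSubstitution

section Counting

mutual
theorem bcntLT_brenMT (x : ℕ) (ξ : ℕ → ℕ) : ∀ t : BTm, bcntLT x (brenMT ξ t) = bcntLT x t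
  | .var _ => rfl
  | .abs t => by simp only [brenMT, bcntLT]; rw [bcntLT_brenMT]
  | .mabs c => by simp only [brenMT, bcntLT]; rw [bcntLC_brenMC]
theorem bcntLC_brenMC (x : ℕ) (ξ : ℕ → ℕ) : ∀ c : BCm, bcntLC x (brenMC ξ c) = bcntLC x c
  | .cut t e => by simp only [brenMC, bcntLC]; rw [bcntLT_brenMT, bcntLE_brenME]
theorem bcntLE_brenME (x : ℕ) (ξ : ℕ → ℕ) : ∀ e : BCt, bcntLE x (brenME ξ e) = bcntLE x e
  | .cvar _ => rfl
  | .cons t e => by simp only [brenME, bcntLE]; rw [bcntLT_brenMT, bcntLE_brenME]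
  | .tmu c => by simp only [brenME, bcntLE]; rw [bcntLC_brenMC]
end

mutual
theorem bcntMT_brenLT (a : ℕ) (ξ : ℕ → ℕ) : ∀ t : BTm, bcntMT a (brenLT ξ t) = bcntMT a t
  | .var _ => rfl
  | .abs t => by simp only [brenLT, bcntMT]; rw [bcntMT_brenLT]
  | .mabs c => by simp only [brenLT, bcntMT]; rw [bcntMC_brenLC]
theorem bcntMC_brenLC (a : ℕ) (ξ : ℕ → ℕ) : ∀ c : BCm, bcntMC a (brenLC ξ c) = bcntMC a c
  | .cut t e => by simp only [brenLC, bcntMC]; rw [bcntMT_brenLT, bcntME_brenLE]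
theorem bcntME_brenLE (a : ℕ) (ξ : ℕ → ℕ) : ∀ e : BCt, bcntME a (brenLE ξ e) = bcntME a e
  | .cvar _ => rfl
  | .cons t e => by simp only [brenLE, bcntME]; rw [bcntMT_brenLT, bcntME_brenLE]
  | .tmu c => by simp only [brenLE, bcntME]; rw [bcntMC_brenLC]
end

mutual
theorem bcntLT_brenLT_of_fiber {ξ : ℕ → ℕ} {x x' : ℕ} (h : ∀ y, ξ y = x ↔ y = x') :
    ∀ t : BTm, bcntLT x (brenLT ξ t) = bcntLT x' t
  | .var y => by simp only [brenLT, bcntLT, h]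
  | .abs t => by simp only [brenLT, bcntLT]; exact bcntLT_brenLT_of_fiber (upr_eq_succ_iff h) t
  | .mabs c => by simp only [brenLT, bcntLT]; exact bcntLC_brenLC_of_fiber h c
theorem bcntLC_brenLC_of_fiber {ξ : ℕ → ℕ} {x x' : ℕ} (h : ∀ y, ξ y = x ↔ y = x') :
    ∀ c : BCm, bcntLC x (brenLC ξ c) = bcntLC x' c
  | .cut t e => by
    simp only [brenLC, bcntLC]; rw [bcntLT_brenLT_of_fiber h t, bcntLE_brenLE_of_fiber h e]
theorem bcntLE_brenLE_of_fiber {ξ : ℕ → ℕ} {x x' : ℕ} (h : ∀ y, ξ y = x ↔ y = x') :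
    ∀ e : BCt, bcntLE x (brenLE ξ e) = bcntLE x' e
  | .cvar _ => rfl
  | .cons t e => by
    simp only [brenLE, bcntLE]; rw [bcntLT_brenLT_of_fiber h t, bcntLE_brenLE_of_fiber h e]
  | .tmu c => by simp only [brenLE, bcntLE]; exact bcntLC_brenLC_of_fiber (upr_eq_succ_iff h) c
end

mutual
theorem bcntMT_brenMT_of_fiber {ξ : ℕ → ℕ} {x x' : ℕ} (h : ∀ y, ξ y = x ↔ y = x') :
    ∀ t : BTm, bcntMT x (brenMT ξ t) = bcntMT x' t
  | .var _ => rfl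
  | .abs t => by simp only [brenMT, bcntMT]; exact bcntMT_brenMT_of_fiber h t
  | .mabs c => by simp only [brenMT, bcntMT]; exact bcntMC_brenMC_of_fiber (upr_eq_succ_iff h) c
theorem bcntMC_brenMC_of_fiber {ξ : ℕ → ℕ} {x x' : ℕ} (h : ∀ y, ξ y = x ↔ y = x') :
    ∀ c : BCm, bcntMC x (brenMC ξ c) = bcntMC x' c
  | .cut t e => by
    simp only [brenMC, bcntMC]; rw [bcntMT_brenMT_of_fiber h t, bcntME_brenME_of_fiber h e]
theorem bcntME_brenME_of_fiber {ξ : ℕ → ℕ} {x x' : ℕ} (h : ∀ y, ξ y = x ↔ y = x') :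
    ∀ e : BCt, bcntME x (brenME ξ e) = bcntME x' e
  | .cvar b => by simp only [brenME, bcntME, h]
  | .cons t e => by
    simp only [brenME, bcntME]; rw [bcntMT_brenMT_of_fiber h t, bcntME_brenME_of_fiber h e]
  | .tmu c => by simp only [brenME, bcntME]; exact bcntMC_brenMC_of_fiber h c
end

mutual
theorem bcntLT_brenLT_eq_zero {ξ : ℕ → ℕ} {x : ℕ} (h : ∀ y, ξ y ≠ x) :
    ∀ t : BTm, bcntLT x (brenLT ξ t) = 0
  | .var y => by simp only [brenLT, bcntLT, if_neg (h y)]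
  | .abs t => by simp only [brenLT, bcntLT]; exact bcntLT_brenLT_eq_zero (upr_ne_succ h) t
  | .mabs c => by simp only [brenLT, bcntLT]; exact bcntLC_brenLC_eq_zero h c
theorem bcntLC_brenLC_eq_zero {ξ : ℕ → ℕ} {x : ℕ} (h : ∀ y, ξ y ≠ x) :
    ∀ c : BCm, bcntLC x (brenLC ξ c) = 0
  | .cut t e => by
    simp only [brenLC, bcntLC]; rw [bcntLT_brenLT_eq_zero h t, bcntLE_brenLE_eq_zero h e]
theorem bcntLE_brenLE_eq_zero {ξ : ℕ → ℕ} {x : ℕ} (h : ∀ y, ξ y ≠ x) :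
    ∀ e : BCt, bcntLE x (brenLE ξ e) = 0
  | .cvar _ => rfl
  | .cons t e => by
    simp only [brenLE, bcntLE]; rw [bcntLT_brenLT_eq_zero h t, bcntLE_brenLE_eq_zero h e]
  | .tmu c => by simp only [brenLE, bcntLE]; exact bcntLC_brenLC_eq_zero (upr_ne_succ h) c
end

end Counting

section Translation

mutual
theorem dagT_renLT (ξ : ℕ → ℕ) : ∀ t : Tm, dagT (renLT ξ t) = brenLT ξ (dagT t)
  | .var _ => rfl
  | .abs t => by simp only [renLT, dagT, brenLT]; rw [dagT_renLT]
  | .app t v => by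
    simp only [renLT, dagT, brenLT, brenLC, brenLE, upr]
    rw [dagT_renLT ξ t, dagT_renLT ξ v]
    simp only [brenLT_brenMT, brenLT_upr_brenLT_succ]
  | .mabs c => by simp only [renLT, dagT, brenLT]; rw [dagC_renLC]
theorem dagC_renLC (ξ : ℕ → ℕ) : ∀ c : Cm, dagC (renLC ξ c) = brenLC ξ (dagC c)
  | .cmd _ t => by simp only [renLC, dagC, brenLC, brenLE]; rw [dagT_renLT]
end

mutual
theorem dagT_renMT (ξ : ℕ → ℕ) : ∀ t : Tm, dagT (renMT ξ t) = brenMT ξ (dagT t)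
  | .var _ => rfl
  | .abs t => by simp only [renMT, dagT, brenMT]; rw [dagT_renMT]
  | .app t v => by
    simp only [renMT, dagT, brenMT, brenMC, brenME, upr]
    rw [dagT_renMT ξ t, dagT_renMT ξ v]
    simp only [← brenLT_brenMT, brenMT_upr_brenMT_succ]
  | .mabs c => by simp only [renMT, dagT, brenMT]; rw [dagC_renMC]
theorem dagC_renMC (ξ : ℕ → ℕ) : ∀ c : Cm, dagC (renMC ξ c) = brenMC ξ (dagC c)
  | .cmd _ t => by simp only [renMC, dagC, brenMC, brenME]; rw [dagT_renMT]
end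

end Translation

section LinearSteps

theorem bRootT_brenMT (ξ : ℕ → ℕ) {t t' : BTm} (h : BRootT t t') :
    BRootT (brenMT ξ t) (brenMT ξ t') := by
  cases h with
  | theta t =>
    simp only [brenMT, brenMC, brenME, upr, brenMT_upr_brenMT_succ]
    exact BRootT.theta _

theorem bRootT_brenLT (ξ : ℕ → ℕ) {t t' : BTm} (h : BRootT t t') :
    BRootT (brenLT ξ t) (brenLT ξ t') := by
  cases h with
  | theta t =>
    simp only [brenLT, brenLC, brenLE, brenLT_brenMT]
    exact BRootT.theta _

theorem bRootClin_brenMC (ξ : ℕ → ℕ) {c c' : BCm} (h : BRootClin c c') :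
    BRootClin (brenMC ξ c) (brenMC ξ c') := by
  cases h with
  | beta u t e =>
    simp only [brenMC, brenMT, brenME, ← brenLE_brenME]
    exact BRootClin.beta _ _ _
  | mu c e hc =>
    have hsub : brenMC ξ (bmsubC (bsub0M e) c)
        = bmsubC (bsub0M (brenME ξ e)) (brenMC (upr ξ) c) := by
      rw [bmsubC_brenMC, ← bmsubC_map_brenME]
      congr 1; funext k; cases k <;> rfl
    simp only [brenMC, brenMT, hsub]
    refine BRootClin.mu _ _ ?_
    rcases hc with ⟨b, rfl⟩ | hc
    · exact Or.inl ⟨ξ b, rfl⟩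
    · exact Or.inr (by rw [bcntMC_brenMC_of_fiber (upr_eq_zero_iff ξ), hc])
  | mutilde t c hc =>
    have hsub : brenMC ξ (blsubC (bsub0L t) c) = blsubC (bsub0L (brenMT ξ t)) (brenMC ξ c) := by
      rw [← blsubC_brenMC]
      congr 2; funext k; cases k <;> rfl
    simp only [brenMC, brenME, hsub]
    refine BRootClin.mutilde _ _ ?_
    rcases hc with ⟨x, rfl⟩ | hc
    · exact Or.inl ⟨x, rfl⟩
    · exact Or.inr (by rw [bcntLC_brenMC, hc])

theorem bRootClin_brenLC (ξ : ℕ → ℕ) {c c' : BCm} (h : BRootClin c c') :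
    BRootClin (brenLC ξ c) (brenLC ξ c') := by
  cases h with
  | beta u t e =>
    simp only [brenLC, brenLT, brenLE, brenLE_upr_brenLE_succ]
    exact BRootClin.beta _ _ _
  | mu c e hc =>
    have hsub : brenLC ξ (bmsubC (bsub0M e) c) = bmsubC (bsub0M (brenLE ξ e)) (brenLC ξ c) := by
      rw [← bmsubC_brenLC]
      congr 2; funext k; cases k <;> rfl
    simp only [brenLC, brenLT, hsub]
    refine BRootClin.mu _ _ ?_
    rcases hc with ⟨b, rfl⟩ | hc
    · exact Or.inl ⟨b, rfl⟩
    · exact Or.inr (by rw [bcntMC_brenLC, hc])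
  | mutilde t c hc =>
    have hsub : brenLC ξ (blsubC (bsub0L t) c)
        = blsubC (bsub0L (brenLT ξ t)) (brenLC (upr ξ) c) := by
      rw [blsubC_brenLC, ← blsubC_map_brenLT]
      congr 1; funext k; cases k <;> rfl
    simp only [brenLC, brenLE, hsub]
    refine BRootClin.mutilde _ _ ?_
    rcases hc with ⟨x, rfl⟩ | hc
    · exact Or.inl ⟨ξ x, rfl⟩
    · exact Or.inr (by rw [bcntLC_brenLC_of_fiber (upr_eq_zero_iff ξ), hc])

mutual
theorem lbStepT_brenMT (ξ : ℕ → ℕ) {t t' : BTm} : LBStepT t t' →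
    LBStepT (brenMT ξ t) (brenMT ξ t')
  | .root h => .root (bRootT_brenMT ξ h)
  | .absC h => .absC (lbStepT_brenMT ξ h)
  | .mabsC h => .mabsC (lbStepC_brenMC (upr ξ) h)
theorem lbStepC_brenMC (ξ : ℕ → ℕ) {c c' : BCm} : LBStepC c c' →
    LBStepC (brenMC ξ c) (brenMC ξ c')
  | .root h => .root (bRootClin_brenMC ξ h)
  | .cutL _ h => .cutL _ (lbStepT_brenMT ξ h)
  | .cutR _ h => .cutR _ (lbStepE_brenME ξ h)
theorem lbStepE_brenME (ξ : ℕ → ℕ) {e e' : BCt} : LBStepE e e' →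
    LBStepE (brenME ξ e) (brenME ξ e')
  | .consL _ h => .consL _ (lbStepT_brenMT ξ h)
  | .consR _ h => .consR _ (lbStepE_brenME ξ h)
  | .tmuC h => .tmuC (lbStepC_brenMC ξ h)
end

mutual
theorem lbStepT_brenLT (ξ : ℕ → ℕ) {t t' : BTm} : LBStepT t t' →
    LBStepT (brenLT ξ t) (brenLT ξ t')
  | .root h => .root (bRootT_brenLT ξ h)
  | .absC h => .absC (lbStepT_brenLT (upr ξ) h)
  | .mabsC h => .mabsC (lbStepC_brenLC ξ h)
theorem lbStepC_brenLC (ξ : ℕ → ℕ) {c c' : BCm} : LBStepC c c' →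
    LBStepC (brenLC ξ c) (brenLC ξ c')
  | .root h => .root (bRootClin_brenLC ξ h)
  | .cutL _ h => .cutL _ (lbStepT_brenLT ξ h)
  | .cutR _ h => .cutR _ (lbStepE_brenLE ξ h)
theorem lbStepE_brenLE (ξ : ℕ → ℕ) {e e' : BCt} : LBStepE e e' →
    LBStepE (brenLE ξ e) (brenLE ξ e')
  | .consL _ h => .consL _ (lbStepT_brenLT ξ h)
  | .consR _ h => .consR _ (lbStepE_brenLE ξ h)
  | .tmuC h => .tmuC (lbStepC_brenLC (upr ξ) h)
end

end LinearSteps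

section Application

/-- `μβ.⟨V | μ̃y.⟨X | y · β⟩⟩`, the translation of an application `t v` with `t† = X`, `v† = V`. -/
def bapp (X V : BTm) : BTm :=
  .mabs (.cut (brenMT Nat.succ V)
    (.tmu (.cut (brenLT Nat.succ (brenMT Nat.succ X)) (.cons (.var 0) (.cvar 0)))))

theorem dagT_app (t v : Tm) : dagT (.app t v) = bapp (dagT t) (dagT v) := rfl

theorem bmsubT_bapp (σ : ℕ → BCt) (X V : BTm) :
    bmsubT σ (bapp X V) = bapp (bmsubT σ X) (bmsubT σ V) := by
  simp only [bapp, bmsubT, bmsubC, bmsubE]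
  rw [bmsubT_brenLT, bmsubT_bupsM_brenMT_succ, bmsubT_bupsM_brenMT_succ]
  rfl

theorem bapp_lbStar {X X' V V' : BTm} (hX : Star LBStepT X X') (hV : Star LBStepT V V') :
    Star LBStepT (bapp X V) (bapp X' V') :=
  (hV.lift (bapp X) fun _ _ h => .mabsC (.cutL _ (lbStepT_brenMT _ h))).trans
    (hX.lift (bapp · V') fun _ _ h =>
      .mabsC (.cutR _ (.tmuC (.cutL _ (lbStepT_brenLT _ (lbStepT_brenMT _ h))))))

theorem cut_bapp_cvar_lbStar (X V : BTm) (a : ℕ) :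
    Star LBStepC (.cut (bapp X V) (.cvar a)) (.cut X (.cons V (.cvar a))) := by
  have hmu : LBStepC (.cut (bapp X V) (.cvar a))
      (.cut V (.tmu (.cut (brenLT Nat.succ X) (.cons (.var 0) (.cvar a))))) := by
    unfold bapp
    convert JC.root (BRootClin.mu _ (.cvar a) (.inl ⟨a, rfl⟩)) using 1
    simp only [bmsubC, bmsubE, bmsubT_brenLT, bmsubT_bsub0M_brenMT_succ]
    rfl
  have hmutilde : LBStepC (.cut V (.tmu (.cut (brenLT Nat.succ X) (.cons (.var 0) (.cvar a)))))
      (.cut X (.cons V (.cvar a))) := by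
    have hlin : bcntLC 0 (.cut (brenLT Nat.succ X) (.cons (.var 0) (.cvar a))) = 1 := by
      simp [bcntLC, bcntLE, bcntLT, bcntLT_brenLT_eq_zero Nat.succ_ne_zero]
    convert JC.root (BRootClin.mutilde V _ (.inr hlin)) using 1
    simp only [blsubC, blsubE, blsubT, blsubT_bsub0L_brenLT_succ, bsub0L]
  exact .head hmu (.single hmutilde)

end Application

section AppendSubstitution

theorem sub1M_cons_renLE (a : ℕ) (u : Tm) :
    (fun k => renLE Nat.succ (sub1M a (.cons (.cvar a) u) k))
      = sub1M a (.cons (.cvar a) (renLT Nat.succ u)) := by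
  funext k
  by_cases h : k = a <;> simp [sub1M, h, renLE]

theorem upsM_sub1M_cons (a : ℕ) (u : Tm) :
    upsM (sub1M a (.cons (.cvar a) u))
      = sub1M (a + 1) (.cons (.cvar (a + 1)) (renMT Nat.succ u)) := by
  funext k
  cases k with
  | zero => simp [upsM, sub1M]
  | succ k => by_cases h : k = a <;> simp [upsM, sub1M, h, renME]

theorem bsub1M_cons_brenLE (a : ℕ) (X : BTm) :
    (fun k => brenLE Nat.succ (bsub1M a (.cons X (.cvar a)) k))
      = bsub1M a (.cons (brenLT Nat.succ X) (.cvar a)) := by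
  funext k
  by_cases h : k = a <;> simp [bsub1M, h, brenLE]

theorem bupsM_bsub1M_cons (a : ℕ) (X : BTm) :
    bupsM (bsub1M a (.cons X (.cvar a)))
      = bsub1M (a + 1) (.cons (brenMT Nat.succ X) (.cvar (a + 1))) := by
  funext k
  cases k with
  | zero => simp [bupsM, bsub1M]
  | succ k => by_cases h : k = a <;> simp [bupsM, bsub1M, h, brenME]

mutual
theorem dagT_msubT_sub1M_cons (a : ℕ) (u : Tm) : ∀ t : Tm,
    Star LBStepT (dagT (msubT (sub1M a (.cons (.cvar a) u)) t))
      (bmsubT (bsub1M a (.cons (dagT u) (.cvar a))) (dagT t))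
  | .var _ => .refl
  | .abs t => by
    simp only [msubT, dagT, bmsubT]
    rw [sub1M_cons_renLE, bsub1M_cons_brenLE, ← dagT_renLT]
    exact (dagT_msubT_sub1M_cons a (renLT Nat.succ u) t).lift _ fun _ _ => .absC
  | .app t v => by
    rw [msubT, dagT_app, dagT_app, bmsubT_bapp]
    exact bapp_lbStar (dagT_msubT_sub1M_cons a u t) (dagT_msubT_sub1M_cons a u v)
  | .mabs c => by
    simp only [msubT, dagT, bmsubT]
    rw [upsM_sub1M_cons, bupsM_bsub1M_cons, ← dagT_renMT]
    exact (dagC_msubC_sub1M_cons (a + 1) (renMT Nat.succ u) c).lift _ fun _ _ => .mabsC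
theorem dagC_msubC_sub1M_cons (a : ℕ) (u : Tm) : ∀ c : Cm,
    Star LBStepC (dagC (msubC (sub1M a (.cons (.cvar a) u)) c))
      (bmsubC (bsub1M a (.cons (dagT u) (.cvar a))) (dagC c))
  | .cmd b t => by
    have ih := dagT_msubT_sub1M_cons a u t
    by_cases hb : b = a
    · subst hb
      simp only [msubC, dagC, bmsubC, bmsubE, sub1M, bsub1M, if_pos, fill, dagT_app]
      exact (cut_bapp_cvar_lbStar _ _ b).trans (ih.lift (BCm.cut · _) fun _ _ => JC.cutL _)
    · simp only [msubC, dagC, bmsubC, bmsubE, sub1M, bsub1M, if_neg hb, fill]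
      exact ih.lift (BCm.cut · _) fun _ _ => JC.cutL _
end

end AppendSubstitution

/-- `(t[α := ⟨α⟩ · u])†` reduces by zero or more linear
λ̄μμ̃-steps to `t†[α := u† · α]`, and likewise for λμ-commands. -/
theorem dag_mu_subst (a : ℕ) (u : Tm) :
    (∀ t : Tm, Star LBStepT
      (dagT (msubT (sub1M a (Ct.cons (Ct.cvar a) u)) t))
      (bmsubT (bsub1M a (BCt.cons (dagT u) (BCt.cvar a))) (dagT t))) ∧
    (∀ c : Cm, Star LBStepC
      (dagC (msubC (sub1M a (Ct.cons (Ct.cvar a) u)) c))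
      (bmsubC (bsub1M a (BCt.cons (dagT u) (BCt.cvar a))) (dagC c))) :=
  ⟨dagT_msubT_sub1M_cons a u, dagC_msubC_sub1M_cons a u⟩

end CHSim
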